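/- The graphs G₅ and G₆ are not isomorphic, and each of them is isomorphic to a graph obtained from the Heawood graph H by deleting three pairwise disjoint edges: there exist edges e₁, e₂, e₃ of H, pairwise sharing no endpoint, with G₅ isomorphic to H minus {e₁, e₂, e₃}, and similarly there exist edges f₁, f₂, f₃ of H, pairwise sharing no endpoint, with G₆ isomorphic to H minus {f₁, f₂, f₃}. -/

import Mathlib

/-- The Heawood graph: the incidence graph of the Fano plane, on vertex set
`ZMod 7 ⊕ ZMod 7`, where point `Sum.inl p` is adjacent to line `Sum.inr ℓ` if and only if
`ℓ - p ∈ {0, 1, 3}`, and no two points and no two lines are adjacent. -/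
def Heawood : SimpleGraph (ZMod 7 ⊕ ZMod 7) :=
  SimpleGraph.fromRel (fun a b => ∃ p ℓ : ZMod 7,
    a = Sum.inl p ∧ b = Sum.inr ℓ ∧ ℓ - p ∈ ({0, 1, 3} : Set (ZMod 7)))

/-- Two edges (elements of `Sym2 V`) are disjoint if they share no endpoint. -/
def EdgeDisj {V : Type*} (e f : Sym2 V) : Prop := ∀ v : V, v ∈ e → v ∉ f

/-- The graph `G₅` (the simplicial inverse pyramid): vertices `vᵢ = i` for `0 ≤ i ≤ 5`,
`mᵢ = 6 + i` for `0 ≤ i ≤ 5`, `t = 12`, `b = 13`; edges `vᵢ ~ v_{(i+1) % 6}`, `vᵢ ~ mᵢ`,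
`mᵢ ~ t` for `i` even and `mᵢ ~ b` for `i` odd. -/
def G5 : SimpleGraph (Fin 14) :=
  SimpleGraph.fromRel (fun a b => (a, b) ∈
    ([(0, 1), (1, 2), (2, 3), (3, 4), (4, 5), (5, 0),
      (0, 6), (1, 7), (2, 8), (3, 9), (4, 10), (5, 11),
      (6, 12), (8, 12), (10, 12), (7, 13), (9, 13), (11, 13)] : List (Fin 14 × Fin 14)))

/-- The graph `G₆`: vertices `jᵢ = i`, `aᵢ = 3 + i`, `xᵢ = 6 + i`, `bᵢ = 9 + i` for
`0 ≤ i ≤ 2`, `u = 12`, `d = 13`; edges `jᵢ ~ aᵢ`, `aᵢ ~ j_{(i+1) % 3}` (a hexagon),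
`u ~ bᵢ`, `bᵢ ~ xᵢ`, `d ~ xᵢ`, `xᵢ ~ jᵢ`. -/
def G6 : SimpleGraph (Fin 14) :=
  SimpleGraph.fromRel (fun a b => (a, b) ∈
    ([(0, 3), (1, 4), (2, 5), (3, 1), (4, 2), (5, 0),
      (12, 9), (12, 10), (12, 11), (9, 6), (10, 7), (11, 8),
      (13, 6), (13, 7), (13, 8), (6, 0), (7, 1), (8, 2)] : List (Fin 14 × Fin 14)))

/-!
Both embeddings are exhibited by explicit vertex maps into the Heawood graph, checked by
evaluation. To separate `G₅` from `G₆`, count the vertices of degree 3 all of whose neighbours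
have degree 2: the apexes `t` and `b` of `G₅` are two such vertices, while in `G₆` only `u` is
one (the neighbours `xᵢ` of `d` have degree 3).
-/

open Finset

namespace SimpleGraph

noncomputable def Iso.ofBijective {V W : Type*} {G : SimpleGraph V} {G' : SimpleGraph W}
    (f : V → W) (hf : Function.Bijective f)
    (hadj : ∀ a b, G'.Adj (f a) (f b) ↔ G.Adj a b) : G ≃g G' :=
  ⟨Equiv.ofBijective f hf, hadj _ _⟩

variable {V W : Type*} [Fintype V] [Fintype W] {G : SimpleGraph V} {G' : SimpleGraph W}
  [DecidableRel G.Adj] [DecidableRel G'.Adj]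

def degreeLinkFinset (G : SimpleGraph V) [DecidableRel G.Adj] (d k : ℕ) : Finset V :=
  {v | G.degree v = d ∧ ∀ w, G.Adj v w → G.degree w = k}

theorem Iso.mem_degreeLinkFinset_iff (f : G ≃g G') (d k : ℕ) (v : V) :
    f v ∈ G'.degreeLinkFinset d k ↔ v ∈ G.degreeLinkFinset d k := by
  simp only [degreeLinkFinset, mem_filter, mem_univ, true_and, f.degree_eq]
  refine and_congr_right fun _ => f.toEquiv.forall_congr_right.symm.trans (forall_congr' ?_)
  intro w
  rw [← f.degree_eq w]
  exact imp_congr_left f.map_adj_iff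

theorem Iso.card_degreeLinkFinset (f : G ≃g G') (d k : ℕ) :
    #(G.degreeLinkFinset d k) = #(G'.degreeLinkFinset d k) :=
  card_equiv f.toEquiv fun v => (f.mem_degreeLinkFinset_iff d k v).symm

end SimpleGraph

instance : DecidableRel Heawood.Adj := fun a b =>
  decidable_of_iff (a ≠ b ∧
    ((∃ p ℓ : ZMod 7, a = Sum.inl p ∧ b = Sum.inr ℓ ∧ (ℓ - p = 0 ∨ ℓ - p = 1 ∨ ℓ - p = 3)) ∨
     (∃ p ℓ : ZMod 7, b = Sum.inl p ∧ a = Sum.inr ℓ ∧ (ℓ - p = 0 ∨ ℓ - p = 1 ∨ ℓ - p = 3))))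
    (by simp [Heawood, SimpleGraph.fromRel_adj])

instance : DecidableRel G5.Adj := fun a b =>
  decidable_of_iff _ (SimpleGraph.fromRel_adj _ a b).symm

instance : DecidableRel G6.Adj := fun a b =>
  decidable_of_iff _ (SimpleGraph.fromRel_adj _ a b).symm

instance (e₁ e₂ e₃ : Sym2 (ZMod 7 ⊕ ZMod 7)) :
    DecidableRel (Heawood.deleteEdges {e₁, e₂, e₃}).Adj := fun a b =>
  decidable_of_iff (Heawood.Adj a b ∧ ¬(s(a, b) = e₁ ∨ s(a, b) = e₂ ∨ s(a, b) = e₃))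
    (by simp [SimpleGraph.deleteEdges_adj])

theorem G5_not_iso_G6 : ¬ Nonempty (G5 ≃g G6) := by
  rintro ⟨f⟩
  have h5 : #(G5.degreeLinkFinset 3 2) = 2 := by decide
  have h6 : #(G6.degreeLinkFinset 3 2) = 1 := by decide
  have := f.card_degreeLinkFinset 3 2
  omega

def G5ToHeawood : Fin 14 → ZMod 7 ⊕ ZMod 7 :=
  ![.inl 2, .inr 3, .inl 3, .inr 4, .inl 4, .inr 5, .inr 2,
    .inl 0, .inr 6, .inl 1, .inr 0, .inl 5, .inl 6, .inr 1]

def G6ToHeawood : Fin 14 → ZMod 7 ⊕ ZMod 7 :=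
  ![.inr 1, .inr 3, .inr 4, .inl 0, .inl 3, .inl 1, .inl 5,
    .inl 2, .inl 4, .inr 6, .inr 2, .inr 0, .inl 6, .inr 5]

theorem G5_iso_heawood_deleteEdges : Nonempty (G5 ≃g Heawood.deleteEdges
    {s(.inl 0, .inr 0), s(.inl 1, .inr 2), s(.inl 5, .inr 6)}) :=
  ⟨.ofBijective G5ToHeawood (by decide) (by decide)⟩

theorem G6_iso_heawood_deleteEdges : Nonempty (G6 ≃g Heawood.deleteEdges
    {s(.inl 0, .inr 0), s(.inl 1, .inr 2), s(.inl 3, .inr 6)}) :=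
  ⟨.ofBijective G6ToHeawood (by decide) (by decide)⟩

/-- `G₅` and `G₆` are non-isomorphic, and each is isomorphic to a graph obtained from the
Heawood graph by deleting three pairwise disjoint edges. -/
theorem G5_G6_from_heawood :
    ¬ Nonempty (G5 ≃g G6) ∧
    (∃ e₁ ∈ Heawood.edgeSet, ∃ e₂ ∈ Heawood.edgeSet, ∃ e₃ ∈ Heawood.edgeSet,
      EdgeDisj e₁ e₂ ∧ EdgeDisj e₁ e₃ ∧ EdgeDisj e₂ e₃ ∧
      Nonempty (G5 ≃g Heawood.deleteEdges {e₁, e₂, e₃})) ∧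
    (∃ f₁ ∈ Heawood.edgeSet, ∃ f₂ ∈ Heawood.edgeSet, ∃ f₃ ∈ Heawood.edgeSet,
      EdgeDisj f₁ f₂ ∧ EdgeDisj f₁ f₃ ∧ EdgeDisj f₂ f₃ ∧
      Nonempty (G6 ≃g Heawood.deleteEdges {f₁, f₂, f₃})) := by
  refine ⟨G5_not_iso_G6,
    ⟨_, ?_, _, ?_, _, ?_, ?_, ?_, ?_, G5_iso_heawood_deleteEdges⟩,
    ⟨_, ?_, _, ?_, _, ?_, ?_, ?_, ?_, G6_iso_heawood_deleteEdges⟩⟩ <;>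
  simp only [SimpleGraph.mem_edgeSet, EdgeDisj] <;> decide
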